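/- arXiv:2311.07610 — 2 statements merged into one kernel-verified Lean document; each statement's English description precedes it below -/
import Mathlib

section
/- For every positive integer n and integer t, ∑_{k=0}^{⌊n/2⌋} (-1)^{n-k}·(n/(n-k))·C(n-k, k)·L_{n-2k+t} equals 2·L_t if n ≡ 0 (mod 5); equals -L_{t+1} if n ≡ 1 or 4 (mod 5); and equals L_{t-1} if n ≡ 2 or 3 (mod 5). -/
open Finset Real

/-- Fibonacci numbers extended to integer indices. -/
def fibZ (n : ℤ) : ℤ :=
  if 0 ≤ n then (Nat.fib n.toNat : ℤ)
  else (-1) ^ ((-n).toNat + 1) * (Nat.fib (-n).toNat : ℤ)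

/-- Lucas numbers on natural indices. -/
def lucasNat : ℕ → ℤ
  | 0 => 2
  | 1 => 1
  | n + 2 => lucasNat (n + 1) + lucasNat n

/-- Lucas numbers extended to integer indices. -/
def lucasZ (n : ℤ) : ℤ :=
  if 0 ≤ n then lucasNat n.toNat
  else (-1) ^ (-n).toNat * lucasNat (-n).toNat

noncomputable def gold : ℝ := (1 + Real.sqrt 5) / 2
noncomputable def gold' : ℝ := (1 - Real.sqrt 5) / 2


/-!
Write `S n t` for the sum. The coefficients `c n k = (-1)^(n-k) n/(n-k) C(n-k,k)` vanish for
`2k > n`, so the range of summation may be enlarged at will, and after substituting `n - k = m`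
they satisfy the Pascal-type rule `c (n+2) (k+1) + c (n+1) (k+1) + c n k = 0`. Shifting the index
therefore gives `S (n+2) t = -S (n+1) (t+1) - S n t`. By the Lucas recurrence the right-hand side,
which depends only on `n mod 5`, satisfies the same recurrence, and both agree for `n = 1, 2`.
-/

lemma lucasZ_natCast (n : ℕ) : lucasZ n = lucasNat n := by
  simp [lucasZ]

lemma lucasZ_neg_natCast (n : ℕ) : lucasZ (-n) = (-1) ^ n * lucasNat n := by
  rcases n.eq_zero_or_pos with rfl | hn
  · rfl
  · rw [lucasZ, if_neg (by omega), neg_neg, Int.toNat_natCast]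

lemma lucasZ_add_two (m : ℤ) : lucasZ (m + 2) = lucasZ (m + 1) + lucasZ m := by
  obtain ⟨n, rfl | rfl⟩ := Int.eq_nat_or_neg m
  · rw [show (n : ℤ) + 2 = (n + 2 : ℕ) by push_cast; ring,
      show (n : ℤ) + 1 = (n + 1 : ℕ) by push_cast; ring,
      lucasZ_natCast, lucasZ_natCast, lucasZ_natCast]
    rfl
  · match n with
    | 0 => rfl
    | 1 => rfl
    | 2 => rfl
    | j + 3 =>
      rw [show -((j + 3 : ℕ) : ℤ) + 2 = -((j + 1 : ℕ) : ℤ) by push_cast; ring,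
        show -((j + 3 : ℕ) : ℤ) + 1 = -((j + 2 : ℕ) : ℤ) by push_cast; ring,
        lucasZ_neg_natCast, lucasZ_neg_natCast, lucasZ_neg_natCast,
        show lucasNat (j + 3) = lucasNat (j + 2) + lucasNat (j + 1) from rfl]
      ring

lemma lucasZ_add_one (m : ℤ) : lucasZ (m + 1) = lucasZ m + lucasZ (m - 1) := by
  simpa [show m - 1 + 2 = m + 1 by ring] using lucasZ_add_two (m - 1)

noncomputable def lucasCoeff (n k : ℕ) : ℝ :=
  (-1 : ℝ) ^ (n - k) * ((n : ℝ) / ((n : ℝ) - (k : ℝ))) * (Nat.choose (n - k) k : ℝ)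

lemma lucasCoeff_add_right (m k : ℕ) :
    lucasCoeff (m + k) k = (-1) ^ m * (((m : ℝ) + k) / m * (m.choose k : ℝ)) := by
  simp [lucasCoeff, mul_assoc]

lemma lucasCoeff_zero {n : ℕ} (hn : n ≠ 0) : lucasCoeff n 0 = (-1) ^ n := by
  simp [lucasCoeff, hn]

lemma lucasCoeff_eq_zero_of_lt {n k : ℕ} (h : n < 2 * k) : lucasCoeff n k = 0 := by
  simp [lucasCoeff, Nat.choose_eq_zero_of_lt (show n - k < k by omega)]

lemma lucasTriangle_succ_succ {m k : ℕ} (h : 0 < m + k) :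
    ((m : ℝ) + 1 + (k + 1)) / (m + 1) * ((m + 1).choose (k + 1) : ℝ) =
      ((m : ℝ) + (k + 1)) / m * (m.choose (k + 1) : ℝ) + ((m : ℝ) + k) / m * (m.choose k : ℝ) := by
  rcases m.eq_zero_or_pos with rfl | hm
  · simp [Nat.choose_eq_zero_of_lt (show 1 < k + 1 by omega)]
  have hpascal : ((m + 1).choose (k + 1) : ℝ) = m.choose k + m.choose (k + 1) := by
    exact_mod_cast Nat.choose_succ_succ m k
  have habsorb : ((m : ℝ) + 1) * m.choose k = (m + 1).choose (k + 1) * (k + 1) := by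
    exact_mod_cast Nat.add_one_mul_choose_eq m k
  field_simp
  linear_combination ((m : ℝ) * (m + k + 2) + k + 1) * hpascal + habsorb

lemma lucasCoeff_succ_succ {n : ℕ} (hn : 0 < n) (k : ℕ) :
    lucasCoeff (n + 2) (k + 1) + lucasCoeff (n + 1) (k + 1) + lucasCoeff n k = 0 := by
  rcases lt_or_ge n k with hnk | hkn
  · rw [lucasCoeff_eq_zero_of_lt (by omega), lucasCoeff_eq_zero_of_lt (by omega),
      lucasCoeff_eq_zero_of_lt (by omega)]
    norm_num
  obtain ⟨m, rfl⟩ := Nat.exists_eq_add_of_le' hkn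
  rw [show m + k + 2 = (m + 1) + (k + 1) by ring, show m + k + 1 = m + (k + 1) by ring,
    lucasCoeff_add_right, lucasCoeff_add_right, lucasCoeff_add_right]
  have hpascal := lucasTriangle_succ_succ hn
  push_cast at hpascal ⊢
  linear_combination -(-1) ^ m * hpascal

noncomputable def lucasSum (n : ℕ) (t : ℤ) : ℝ :=
  ∑ k ∈ range (n / 2 + 1), lucasCoeff n k * (lucasZ ((n : ℤ) - 2 * k + t) : ℝ)

lemma lucasSum_eq_sum_range {n N : ℕ} (hN : n / 2 < N) (t : ℤ) :
    lucasSum n t = ∑ k ∈ range N, lucasCoeff n k * (lucasZ ((n : ℤ) - 2 * k + t) : ℝ) := by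
  refine sum_subset (range_subset_range.mpr hN) fun k hk hk' => ?_
  simp only [mem_range] at hk hk'
  rw [lucasCoeff_eq_zero_of_lt (by omega), zero_mul]

lemma lucasSum_succ_succ {n : ℕ} (hn : 0 < n) (t : ℤ) :
    lucasSum (n + 2) t = -lucasSum (n + 1) (t + 1) - lucasSum n t := by
  have hshift : ∀ k : ℕ,
      lucasCoeff (n + 2) (k + 1) * (lucasZ (((n + 2 : ℕ) : ℤ) - 2 * (k + 1 : ℕ) + t) : ℝ) +
        lucasCoeff (n + 1) (k + 1) * (lucasZ (((n + 1 : ℕ) : ℤ) - 2 * (k + 1 : ℕ) + (t + 1)) : ℝ) =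
        -(lucasCoeff n k * (lucasZ ((n : ℤ) - 2 * k + t) : ℝ)) := by
    intro k
    rw [show ((n + 2 : ℕ) : ℤ) - 2 * (k + 1 : ℕ) + t = n - 2 * k + t by push_cast; ring,
      show ((n + 1 : ℕ) : ℤ) - 2 * (k + 1 : ℕ) + (t + 1) = n - 2 * k + t by push_cast; ring]
    linear_combination (lucasZ ((n : ℤ) - 2 * k + t) : ℝ) * lucasCoeff_succ_succ hn k
  have hlead :
      lucasCoeff (n + 2) 0 * (lucasZ (((n + 2 : ℕ) : ℤ) - 2 * (0 : ℕ) + t) : ℝ) +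
        lucasCoeff (n + 1) 0 * (lucasZ (((n + 1 : ℕ) : ℤ) - 2 * (0 : ℕ) + (t + 1)) : ℝ) = 0 := by
    rw [show ((n + 1 : ℕ) : ℤ) - 2 * (0 : ℕ) + (t + 1) = ((n + 2 : ℕ) : ℤ) - 2 * (0 : ℕ) + t by
        push_cast; ring,
      ← add_mul, lucasCoeff_zero (by omega), lucasCoeff_zero (by omega)]
    ring
  suffices lucasSum (n + 2) t + lucasSum (n + 1) (t + 1) = -lucasSum n t by linarith
  rw [lucasSum_eq_sum_range (show (n + 2) / 2 < n / 2 + 2 by omega),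
    lucasSum_eq_sum_range (show (n + 1) / 2 < n / 2 + 2 by omega), ← sum_add_distrib,
    sum_range_succ', sum_congr rfl fun k _ => hshift k, hlead, add_zero, sum_neg_distrib, lucasSum]

noncomputable def lucasSumValue (n : ℕ) (t : ℤ) : ℝ :=
  if n % 5 = 0 then 2 * (lucasZ t : ℝ)
  else if n % 5 = 1 ∨ n % 5 = 4 then -(lucasZ (t + 1) : ℝ)
  else (lucasZ (t - 1) : ℝ)

lemma lucasSumValue_succ_succ (n : ℕ) (t : ℤ) :
    lucasSumValue (n + 2) t = -lucasSumValue (n + 1) (t + 1) - lucasSumValue n t := by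
  have h₀ : (lucasZ (t + 2) : ℝ) = lucasZ (t + 1) + lucasZ t := by
    exact_mod_cast lucasZ_add_two t
  have h₁ : (lucasZ (t + 1) : ℝ) = lucasZ t + lucasZ (t - 1) := by
    exact_mod_cast lucasZ_add_one t
  unfold lucasSumValue
  rw [show t + 1 + 1 = t + 2 by ring, show t + 1 - 1 = t by ring]
  obtain h | h | h | h | h : n % 5 = 0 ∨ n % 5 = 1 ∨ n % 5 = 2 ∨ n % 5 = 3 ∨ n % 5 = 4 := by
    omega
  all_goals simp [Nat.add_mod, h]; linarith

theorem lucasSum_eq_lucasSumValue {n : ℕ} (hn : 0 < n) (t : ℤ) :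
    lucasSum n t = lucasSumValue n t := by
  induction n using Nat.strong_induction_on generalizing t with
  | _ n ih =>
    match n, hn with
    | 1, _ => simp [lucasSum, lucasSumValue, lucasCoeff, add_comm]
    | 2, _ =>
      rw [show 2 = 0 + 2 from rfl, lucasSumValue_succ_succ]
      norm_num [lucasSum, lucasSumValue, lucasCoeff, sum_range_succ, add_comm _ t]
      ring_nf
    | m + 3, _ =>
      rw [lucasSum_succ_succ (by omega), lucasSumValue_succ_succ,
        ih (m + 2) (by omega) (by omega), ih (m + 1) (by omega) (by omega)]

theorem stmt10 (n : ℕ) (hn : 0 < n) (t : ℤ) :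
    ∑ k ∈ Finset.range (n / 2 + 1),
        (-1 : ℝ) ^ (n - k) * ((n : ℝ) / ((n : ℝ) - (k : ℝ))) * (Nat.choose (n - k) k : ℝ) *
          (lucasZ ((n : ℤ) - 2 * k + t) : ℝ) =
      if n % 5 = 0 then 2 * (lucasZ t : ℝ)
      else if n % 5 = 1 ∨ n % 5 = 4 then -(lucasZ (t + 1) : ℝ)
      else (lucasZ (t - 1) : ℝ) :=
  lucasSum_eq_lucasSumValue hn t
end

section
/- For every positive integer n and integer t, ∑_{k=1}^{n} (-1)^{k-1}·(k/(n+k))·C(n+k, n-k)·F_{2k+t} equals 0 if n ≡ 0 (mod 5); equals (-1)^{⌊n/5⌋}·F_{t+2}/2 if n ≡ 1 or 4 (mod 5); and equals (-1)^{⌊n/5⌋+1}·F_{t+1}/2 if n ≡ 2 or 3 (mod 5). -/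
/-!
Since k/(n+k) · C(n+k, n-k) = C(n+k-1, 2k-1)/2, twice the sum is
a(n, t) = ∑_{k<n} (-1)^k C(n+k, 2k+1) F_{2k+2+t}. By Pascal's rule the second difference in n of
C(n+k, 2k+1) is C(n+k, 2k-1), so a(n+2, t) = 2 a(n+1, t) - a(n, t) - a(n+1, t+2), which the
Fibonacci recurrence turns into a(n+2, t) = a(n+1, t) - a(n+1, t+1) - a(n, t). Iterating gives
a(n+5, t) = -a(n, t), and a(0..4, t) = 0, F_{t+2}, -F_{t+1}, -F_{t+1}, F_{t+2}.
-/

open Finset Real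

section AltChooseSum

variable {R : Type*} [CommRing R]

def altChooseSum (G : ℕ → R) (n : ℕ) : R :=
  ∑ k ∈ range n, (-1) ^ k * ((n + k).choose (2 * k + 1) : R) * G k

lemma altChooseSum_eq_sum_range_of_le (G : ℕ → R) {n m : ℕ} (h : n ≤ m) :
    altChooseSum G n = ∑ k ∈ range m, (-1) ^ k * ((n + k).choose (2 * k + 1) : R) * G k := by
  refine sum_subset (range_subset_range.mpr h) fun k _ hk => ?_
  rw [Nat.choose_eq_zero_of_lt (by simp only [mem_range] at hk; omega)]
  simp

lemma altChooseSum_add (G H : ℕ → R) (n : ℕ) :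
    altChooseSum (G + H) n = altChooseSum G n + altChooseSum H n := by
  simp only [altChooseSum, Pi.add_apply, mul_add, sum_add_distrib]

lemma cast_choose_add_two (m j : ℕ) :
    ((m + 2).choose (j + 2) : R) = 2 * (m + 1).choose (j + 2) - m.choose (j + 2) + m.choose j := by
  simp only [Nat.choose_succ_succ, Nat.cast_add]
  ring

lemma altChooseSum_succ_succ (G : ℕ → R) (n : ℕ) :
    altChooseSum G (n + 2) = 2 * altChooseSum G (n + 1) - altChooseSum G n
      - altChooseSum (fun k => G (k + 1)) (n + 1) := by
  have hdiff : altChooseSum G (n + 2) - 2 * altChooseSum G (n + 1) + altChooseSum G n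
      = -altChooseSum (fun k => G (k + 1)) (n + 1) := by
    rw [altChooseSum_eq_sum_range_of_le G (by omega : n + 1 ≤ n + 2),
      altChooseSum_eq_sum_range_of_le G (by omega : n ≤ n + 2), altChooseSum, altChooseSum,
      mul_sum, ← sum_sub_distrib, ← sum_add_distrib, sum_range_succ', ← sum_neg_distrib]
    have h0 : ((n + 2).choose 1 : R) - 2 * (n + 1).choose 1 + n.choose 1 = 0 := by
      simp only [Nat.choose_one_right, Nat.cast_add]; ring
    refine (add_eq_left.mpr ?_).trans (sum_congr rfl fun j _ => ?_)
    · linear_combination G 0 * h0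
    · rw [show n + 2 + (j + 1) = n + j + 1 + 2 by omega, show n + 1 + (j + 1) = n + j + 1 + 1 by omega,
        show n + (j + 1) = n + j + 1 by omega, show 2 * (j + 1) + 1 = 2 * j + 1 + 2 by omega,
        cast_choose_add_two, show n + 1 + j = n + j + 1 by omega]
      ring
  linear_combination hdiff

end AltChooseSum

lemma fibZ_natCast (j : ℕ) : fibZ j = Nat.fib j := by
  simp [fibZ]

lemma fibZ_neg_natCast (j : ℕ) : fibZ (-j) = (-1) ^ (j + 1) * Nat.fib j := by
  rcases j with _ | j
  · simp [fibZ]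
  · rw [fibZ, if_neg (by omega)]
    simp

lemma fibZ_add_two (m : ℤ) : fibZ (m + 2) = fibZ (m + 1) + fibZ m := by
  obtain ⟨j, rfl | rfl⟩ := Int.eq_nat_or_neg m
  · have h1 := fibZ_natCast (j + 1)
    have h2 := fibZ_natCast (j + 2)
    push_cast at h1 h2
    rw [h1, h2, fibZ_natCast, Nat.fib_add_two, Nat.cast_add, add_comm]
  rcases j with _ | _ | i
  · simp [fibZ]
  · simp [fibZ]
  · have h0 := fibZ_neg_natCast i
    have h1 := fibZ_neg_natCast (i + 1)
    have h2 := fibZ_neg_natCast (i + 2)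
    push_cast [Nat.fib_add_two, pow_succ] at h0 h1 h2 ⊢
    rw [show -((i : ℤ) + 1 + 1) + 2 = -i by ring, show -((i : ℤ) + 1 + 1) + 1 = -(i + 1) by ring,
      show -((i : ℤ) + 1 + 1) = -(i + 2) by ring, h0, h1, h2]
    ring

def fibChooseSum (n : ℕ) (t : ℤ) : ℤ :=
  altChooseSum (fun k : ℕ => fibZ (2 * k + 2 + t)) n

lemma fibChooseSum_add_two (n : ℕ) (t : ℤ) :
    fibChooseSum n (t + 2) = fibChooseSum n (t + 1) + fibChooseSum n t := by
  rw [fibChooseSum, fibChooseSum, fibChooseSum, ← altChooseSum_add]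
  congr 1
  funext k
  rw [Pi.add_apply, ← add_assoc, fibZ_add_two, add_assoc]

lemma fibChooseSum_succ_succ (n : ℕ) (t : ℤ) :
    fibChooseSum (n + 2) t =
      fibChooseSum (n + 1) t - fibChooseSum (n + 1) (t + 1) - fibChooseSum n t := by
  have hshift : (fun k : ℕ => fibZ (2 * ((k + 1 : ℕ) : ℤ) + 2 + t)) =
      fun k : ℕ => fibZ (2 * k + 2 + (t + 2)) := by
    funext k; push_cast; ring_nf
  rw [fibChooseSum, altChooseSum_succ_succ, hshift, ← fibChooseSum, ← fibChooseSum, ← fibChooseSum,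
    fibChooseSum_add_two]
  ring

lemma fibChooseSum_zero (t : ℤ) : fibChooseSum 0 t = 0 := rfl

lemma fibChooseSum_one (t : ℤ) : fibChooseSum 1 t = fibZ (t + 2) := by
  simp [fibChooseSum, altChooseSum, add_comm]

lemma fibChooseSum_two (t : ℤ) : fibChooseSum 2 t = -fibZ (t + 1) := by
  rw [fibChooseSum_succ_succ, fibChooseSum_one, fibChooseSum_one, fibChooseSum_zero]
  linear_combination (norm := ring_nf) -fibZ_add_two (t + 1)

lemma fibChooseSum_three (t : ℤ) : fibChooseSum 3 t = -fibZ (t + 1) := by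
  rw [fibChooseSum_succ_succ, fibChooseSum_two, fibChooseSum_two, fibChooseSum_one]
  ring_nf

lemma fibChooseSum_four (t : ℤ) : fibChooseSum 4 t = fibZ (t + 2) := by
  rw [fibChooseSum_succ_succ, fibChooseSum_three, fibChooseSum_three, fibChooseSum_two]
  ring_nf

-- With E the shift t ↦ t + 1 (so E² = E + 1), the recurrence in n has characteristic polynomial
-- z² - (1 - E) z + 1, which divides z⁵ + 1.
lemma fibChooseSum_add_five (n : ℕ) (t : ℤ) : fibChooseSum (n + 5) t = -fibChooseSum n t := by
  have := fibChooseSum_succ_succ (n + 3) t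
  have := fibChooseSum_succ_succ (n + 2) t
  have := fibChooseSum_succ_succ (n + 2) (t + 1)
  have := fibChooseSum_succ_succ (n + 1) t
  have := fibChooseSum_succ_succ (n + 1) (t + 1)
  have := fibChooseSum_succ_succ n t
  have := fibChooseSum_add_two (n + 3) t
  have := fibChooseSum_add_two (n + 2) t
  rw [add_assoc t 1 1, one_add_one_eq_two] at *
  linarith

lemma fibChooseSum_five_mul_add (q r : ℕ) (t : ℤ) :
    fibChooseSum (5 * q + r) t = (-1) ^ q * fibChooseSum r t := by
  induction q with
  | zero => simp
  | succ q ih =>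
    rw [show 5 * (q + 1) + r = 5 * q + r + 5 by ring, fibChooseSum_add_five, ih, pow_succ]
    ring

lemma mul_choose_div_eq_choose_div_two {n j : ℕ} (h : j < n) :
    ((j + 1 : ℕ) : ℝ) / (n + (j + 1 : ℕ)) * (n + (j + 1)).choose (n - (j + 1)) =
      (n + j).choose (2 * j + 1) / 2 := by
  have hsymm : (n + (j + 1)).choose (n - (j + 1)) = (n + j + 1).choose (2 * j + 2) :=
    Nat.choose_symm_of_eq_add (by omega)
  have hpascal : ((n + j + 1 : ℕ) : ℝ) * (n + j).choose (2 * j + 1) =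
      (n + j + 1).choose (2 * j + 1 + 1) * ((2 * j + 1 + 1 : ℕ) : ℝ) := by
    exact_mod_cast Nat.add_one_mul_choose_eq (n + j) (2 * j + 1)
  rw [hsymm]
  push_cast at hpascal ⊢
  field_simp
  linear_combination -hpascal

lemma sum_Icc_eq_fibChooseSum_div_two (n : ℕ) (t : ℤ) :
    ∑ k ∈ Finset.Icc 1 n,
        (-1 : ℝ) ^ (k - 1) * ((k : ℝ) / ((n : ℝ) + (k : ℝ))) * (Nat.choose (n + k) (n - k) : ℝ) *
          (fibZ (2 * k + t) : ℝ) = fibChooseSum n t / 2 := by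
  rw [← Finset.Ico_add_one_right_eq_Icc, Finset.sum_Ico_eq_sum_range, Nat.add_sub_cancel,
    fibChooseSum, altChooseSum, Int.cast_sum, sum_div]
  refine sum_congr rfl fun j hj => ?_
  rw [add_comm 1 j, Nat.add_sub_cancel, mul_assoc _ (_ / _),
    mul_choose_div_eq_choose_div_two (mem_range.mp hj)]
  push_cast
  rw [show 2 * ((j : ℤ) + 1) + t = 2 * j + 2 + t by ring]
  ring

theorem stmt15_general (n : ℕ) (t : ℤ) :
    ∑ k ∈ Finset.Icc 1 n,
        (-1 : ℝ) ^ (k - 1) * ((k : ℝ) / ((n : ℝ) + (k : ℝ))) * (Nat.choose (n + k) (n - k) : ℝ) *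
          (fibZ (2 * k + t) : ℝ) =
      if n % 5 = 0 then 0
      else if n % 5 = 1 ∨ n % 5 = 4 then (-1 : ℝ) ^ (n / 5) * (fibZ (t + 2) : ℝ) / 2
      else (-1 : ℝ) ^ (n / 5 + 1) * (fibZ (t + 1) : ℝ) / 2 := by
  have hperiod := fibChooseSum_five_mul_add (n / 5) (n % 5) t
  rw [Nat.div_add_mod] at hperiod
  rw [sum_Icc_eq_fibChooseSum_div_two, hperiod]
  have : n % 5 < 5 := Nat.mod_lt n (by norm_num)
  interval_cases n % 5 <;>
    simp [fibChooseSum_zero, fibChooseSum_one, fibChooseSum_two, fibChooseSum_three,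
      fibChooseSum_four, pow_succ]

theorem stmt15 (n : ℕ) (hn : 0 < n) (t : ℤ) :
    ∑ k ∈ Finset.Icc 1 n,
        (-1 : ℝ) ^ (k - 1) * ((k : ℝ) / ((n : ℝ) + (k : ℝ))) * (Nat.choose (n + k) (n - k) : ℝ) *
          (fibZ (2 * k + t) : ℝ) =
      if n % 5 = 0 then 0
      else if n % 5 = 1 ∨ n % 5 = 4 then (-1 : ℝ) ^ (n / 5) * (fibZ (t + 2) : ℝ) / 2
      else (-1 : ℝ) ^ (n / 5 + 1) * (fibZ (t + 1) : ℝ) / 2 :=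
  stmt15_general n t
end
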